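/- arXiv:2507.19405 — 3 statements merged into one kernel-verified Lean document; each statement's English description precedes it below -/
import Mathlib

section
/- Let d : V → V be linear with d² = 0 on a finite-dimensional real inner product space and δ its adjoint. Suppose the Poincaré inequality holds: there is C_P > 0 such that ‖u‖ ≤ C_P ‖d u‖ for all u ∈ (ker d)ᗮ. Then every u ∈ V with u orthogonal to ker d ∩ ker δ can be written u = d v + w with v ∈ (ker d)ᗮ, w ∈ (ker d)ᗮ, ‖w‖ ≤ C_P ‖d u‖, and ‖v‖ + ‖d v‖ ≤ C ‖u‖ for a constant C depending only on C_P. -/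
open scoped RealInnerProductSpace

/-! Write `u = a + w` with `a` the orthogonal projection of `u` onto `ker d`. Since `δ` is adjoint
to `d`, `ker δ = (range d)ᗮ`, and `d² = 0` gives `range d ≤ ker d`; hence
`ker d = range d ⊕ (ker d ⊓ ker δ)` orthogonally. As `u`, and therefore `a`, is orthogonal to
`ker d ⊓ ker δ`, this forces `a = d v` with `v ∈ (ker d)ᗮ`, and the Poincaré inequality applied to
`v` and to `w` gives both bounds. -/

section Adjoint

open Submodule LinearMap

variable {𝕜 E F : Type*} [RCLike 𝕜] [NormedAddCommGroup E] [InnerProductSpace 𝕜 E]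
  [NormedAddCommGroup F] [InnerProductSpace 𝕜 F]

theorem LinearMap.ker_eq_orthogonal_range_of_inner_eq {d : E →ₗ[𝕜] F} {δ : F →ₗ[𝕜] E}
    (hadj : ∀ u v, inner 𝕜 (δ u) v = inner 𝕜 u (d v)) : ker δ = (range d)ᗮ := by
  ext u
  simp only [mem_ker, mem_orthogonal', mem_range, forall_exists_index, forall_apply_eq_imp_iff,
    ← hadj]
  constructor
  · intro h v
    rw [h, inner_zero_left]
  · intro h
    exact inner_self_eq_zero.mp (h (δ u))

theorem LinearMap.exists_mem_orthogonal_ker_apply_eq (d : E →ₗ[𝕜] F)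
    [(ker d).HasOrthogonalProjection] {a : F} (ha : a ∈ range d) : ∃ v ∈ (ker d)ᗮ, d v = a := by
  obtain ⟨v₀, rfl⟩ := ha
  refine ⟨v₀ - (ker d).starProjection v₀, sub_starProjection_mem_orthogonal v₀, ?_⟩
  rw [map_sub, (ker d).starProjection_apply_mem v₀, sub_zero]

end Adjoint

section Hodge

open Submodule LinearMap

variable {𝕜 E : Type*} [RCLike 𝕜] [NormedAddCommGroup E] [InnerProductSpace 𝕜 E]
  [FiniteDimensional 𝕜 E]

theorem Submodule.inf_orthogonal_inf_orthogonal_eq_of_le {R K : Submodule 𝕜 E} (h : R ≤ K) :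
    K ⊓ (K ⊓ Rᗮ)ᗮ = R := by
  have hKR : K ⊓ Rᗮ = (Kᗮ ⊔ R)ᗮ := by rw [← inf_orthogonal, orthogonal_orthogonal]
  rw [hKR, orthogonal_orthogonal, sup_comm, inf_comm, sup_inf_assoc_of_le _ h, inf_comm,
    inf_orthogonal_eq_bot, sup_bot_eq]

theorem LinearMap.ker_inf_orthogonal_harmonic_eq_range {d δ : E →ₗ[𝕜] E} (hd : d ∘ₗ d = 0)
    (hadj : ∀ u v, inner 𝕜 (δ u) v = inner 𝕜 u (d v)) :
    ker d ⊓ (ker d ⊓ ker δ)ᗮ = range d := by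
  have hRK : range d ≤ ker d := range_le_ker_iff.mpr hd
  rw [ker_eq_orthogonal_range_of_inner_eq hadj, inf_orthogonal_inf_orthogonal_eq_of_le hRK]

end Hodge

open Submodule LinearMap in
theorem stmt_5 {V : Type*} [NormedAddCommGroup V] [InnerProductSpace ℝ V]
    [FiniteDimensional ℝ V] (d δ : V →ₗ[ℝ] V) (hd : d ∘ₗ d = 0)
    (hadj : ∀ u v : V, ⟪δ u, v⟫ = ⟪u, d v⟫)
    (CP : ℝ) (hCP : 0 < CP)
    (hPoincare : ∀ u ∈ (LinearMap.ker d)ᗮ, ‖u‖ ≤ CP * ‖d u‖) :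
    ∃ C : ℝ, 0 < C ∧ ∀ u : V, u ∈ ((LinearMap.ker d ⊓ LinearMap.ker δ : Submodule ℝ V))ᗮ →
      ∃ v w : V, v ∈ (LinearMap.ker d)ᗮ ∧ w ∈ (LinearMap.ker d)ᗮ ∧
        u = d v + w ∧ ‖w‖ ≤ CP * ‖d u‖ ∧ ‖v‖ + ‖d v‖ ≤ C * ‖u‖ := by
  refine ⟨CP + 1, by linarith, fun u hu => ?_⟩
  set a := (ker d).starProjection u
  have haK : a ∈ ker d := (ker d).starProjection_apply_mem u
  have hwK : u - a ∈ (ker d)ᗮ := sub_starProjection_mem_orthogonal u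
  have ha : a ∈ range d := by
    rw [← ker_inf_orthogonal_harmonic_eq_range hd hadj]
    exact ⟨haK, by simpa using sub_mem hu (orthogonal_le inf_le_left hwK)⟩
  obtain ⟨v, hvK, hdv⟩ := d.exists_mem_orthogonal_ker_apply_eq ha
  have hdu : d u = d (u - a) := by rw [map_sub, mem_ker.mp haK, sub_zero]
  refine ⟨v, u - a, hvK, hwK, by rw [hdv, add_sub_cancel], hdu ▸ hPoincare _ hwK, ?_⟩
  calc ‖v‖ + ‖d v‖ ≤ CP * ‖d v‖ + ‖d v‖ := by gcongr; exact hPoincare v hvK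
    _ = (CP + 1) * ‖a‖ := by rw [hdv]; ring
    _ ≤ (CP + 1) * ‖u‖ := by gcongr; exact norm_starProjection_apply_le _ u
end

section
/- Let d : V → V be linear with d² = 0 and δ its adjoint on a real inner product space. Suppose D u = Π f and the consistency identity D e = a + δ b + c holds, where e := Πu − u, a := (Π−J)(du), b := (Π−J)u, c := (J−Π)f for some vectors a, b, c ∈ V. Then ‖d e‖ ≤ ‖a‖ + ‖c‖. -/
open scoped RealInnerProductSpace

theorem stmt_6 {V : Type*} [NormedAddCommGroup V] [InnerProductSpace ℝ V]
    (d δ : V →ₗ[ℝ] V) (hd : d ∘ₗ d = 0)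
    (hadj : ∀ u v : V, ⟪δ u, v⟫ = ⟪u, d v⟫)
    (e a b c : V) (hcons : (d + δ) e = a + δ b + c) :
    ‖d e‖ ≤ ‖a‖ + ‖c‖ := by
  have hdd : ∀ v : V, d (d v) = 0 := fun v => by
    have := congrArg (fun f => f v) hd; simpa using this
  have h1 : ⟪δ e, d e⟫ = 0 := by rw [hadj, hdd]; simp
  have h2 : ⟪δ b, d e⟫ = 0 := by rw [hadj, hdd]; simp
  have key : ‖d e‖ ^ 2 = ⟪a + c, d e⟫ := by
    have := congrArg (fun v => ⟪v, d e⟫) hcons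
    simp only [LinearMap.add_apply] at this
    rw [inner_add_left, inner_add_left, inner_add_left, h1, h2] at this
    rw [inner_add_left]
    rw [real_inner_self_eq_norm_sq] at this
    linarith
  have hb : ⟪a + c, d e⟫ ≤ (‖a‖ + ‖c‖) * ‖d e‖ := by
    calc ⟪a + c, d e⟫ ≤ ‖a + c‖ * ‖d e‖ := real_inner_le_norm _ _
      _ ≤ (‖a‖ + ‖c‖) * ‖d e‖ := by
        apply mul_le_mul_of_nonneg_right (norm_add_le _ _) (norm_nonneg _)
  rcases eq_or_lt_of_le (norm_nonneg (d e)) with h | h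
  · rw [← h]; positivity
  · nlinarith [key, hb]
end

section
/- Let V be a real inner product space, d : V →ₗ[ℝ] V with d² = 0, δ its adjoint, D = d + δ. Suppose e, a, b, c ∈ V satisfy D e = a + δ b + c, and suppose e admits a decomposition e = d v + w with ‖v‖ + ‖d v‖ ≤ C₁‖e‖ and ‖w‖ ≤ C₂‖d e‖. Then ‖e‖ + ‖d e‖ ≤ C (‖a‖ + ‖b‖ + ‖c‖) for a constant C depending only on C₁ and C₂. -/
set_option maxHeartbeats 800000
open scoped RealInnerProductSpace

theorem stmt_7 {V : Type*} [NormedAddCommGroup V] [InnerProductSpace ℝ V]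
    (d δ : V →ₗ[ℝ] V) (hd : d ∘ₗ d = 0)
    (hadj : ∀ u v : V, ⟪δ u, v⟫ = ⟪u, d v⟫)
    (C₁ C₂ : ℝ) :
    ∃ C : ℝ, 0 ≤ C ∧ ∀ e a b c v w : V,
      (d + δ) e = a + δ b + c →
      e = d v + w →
      ‖v‖ + ‖d v‖ ≤ C₁ * ‖e‖ →
      ‖w‖ ≤ C₂ * ‖d e‖ →
      ‖e‖ + ‖d e‖ ≤ C * (‖a‖ + ‖b‖ + ‖c‖) := by
  have hdd : ∀ x : V, d (d x) = 0 := fun x => congrFun (congrArg DFunLike.coe hd) x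
  set K := max C₁ 0 with hKdef
  set M := max C₂ 0 with hMdef
  have hK : 0 ≤ K := le_max_right _ _
  have hM : 0 ≤ M := le_max_right _ _
  refine ⟨2 * K + M + 1, by positivity, ?_⟩
  intro e a b c v w hDe hdec hv hw
  have hDe' : d e + δ e = a + δ b + c := by
    simpa [LinearMap.add_apply] using hDe
  have hSnn : (0:ℝ) ≤ ‖a‖ + ‖b‖ + ‖c‖ := by positivity
  -- Step 1: ‖d e‖ ≤ ‖a‖ + ‖c‖
  have hδede : ⟪δ e, d e⟫ = 0 := by rw [hadj, hdd, inner_zero_right]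
  have hδbde : ⟪δ b, d e⟫ = 0 := by rw [hadj, hdd, inner_zero_right]
  have key1 : ⟪d e, d e⟫ = ⟪a, d e⟫ + ⟪c, d e⟫ := by
    have h := congrArg (fun z => ⟪z, d e⟫) hDe'
    simp only [inner_add_left] at h
    linarith [h, hδede, hδbde]
  have hde : ‖d e‖ ≤ ‖a‖ + ‖c‖ := by
    rcases eq_or_lt_of_le (norm_nonneg (d e)) with h0 | h0
    · rw [← h0]; positivity
    · have h2 : ‖d e‖ * ‖d e‖ ≤ (‖a‖ + ‖c‖) * ‖d e‖ := by
        rw [← real_inner_self_eq_norm_mul_norm, key1]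
        nlinarith [real_inner_le_norm a (d e), real_inner_le_norm c (d e)]
      exact le_of_mul_le_mul_right h2 h0
  -- Step 2: bound ‖e‖
  have hδe : δ e = a + δ b + c - d e := by
    rw [← hDe']; abel
  have hdve : ⟪d v, e⟫ = ⟪v, a⟫ + ⟪b, d v⟫ + ⟪v, c⟫ - ⟪v, d e⟫ := by
    have h1 : ⟪d v, e⟫ = ⟪δ e, v⟫ := by rw [hadj, real_inner_comm]
    have h2 : ⟪δ b, v⟫ = ⟪b, d v⟫ := hadj b v
    rw [h1, hδe]
    simp only [inner_sub_left, inner_add_left, h2]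
    rw [real_inner_comm a v, real_inner_comm c v, real_inner_comm (d e) v]
  have key2 : ⟪e, e⟫ = ⟪v, a⟫ + ⟪b, d v⟫ + ⟪v, c⟫ - ⟪v, d e⟫ + ⟪w, e⟫ := by
    nth_rewrite 1 [hdec]
    rw [inner_add_left, hdve]
  -- norm bounds
  have hv' : ‖v‖ + ‖d v‖ ≤ K * ‖e‖ := le_trans hv (by
    have : C₁ * ‖e‖ ≤ K * ‖e‖ := mul_le_mul_of_nonneg_right (le_max_left _ _) (norm_nonneg e)
    exact this)
  have hw' : ‖w‖ ≤ M * (‖a‖ + ‖c‖) := by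
    calc ‖w‖ ≤ C₂ * ‖d e‖ := hw
      _ ≤ M * ‖d e‖ := mul_le_mul_of_nonneg_right (le_max_left _ _) (norm_nonneg _)
      _ ≤ M * (‖a‖ + ‖c‖) := mul_le_mul_of_nonneg_left hde hM
  have he : ‖e‖ ≤ (2 * K + M) * (‖a‖ + ‖b‖ + ‖c‖) := by
    rcases eq_or_lt_of_le (norm_nonneg e) with h0 | h0
    · rw [← h0]; positivity
    · have hCS := real_inner_le_norm v a
      have hCS2 := real_inner_le_norm b (d v)
      have hCS3 := real_inner_le_norm v c
      have hCS4 := neg_le_of_neg_le (neg_le_of_abs_le (abs_real_inner_le_norm v (d e)))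
      have hCS5 := real_inner_le_norm w e
      have hee : ‖e‖ * ‖e‖ = ⟪e, e⟫ := (real_inner_self_eq_norm_mul_norm e).symm
      have hbound : ‖e‖ * ‖e‖ ≤ (2 * K + M) * (‖a‖ + ‖b‖ + ‖c‖) * ‖e‖ := by
        rw [hee, key2]
        have hvn : 0 ≤ ‖v‖ := norm_nonneg v
        have hdvn : 0 ≤ ‖d v‖ := norm_nonneg (d v)
        have han : 0 ≤ ‖a‖ := norm_nonneg a
        have hbn : 0 ≤ ‖b‖ := norm_nonneg b
        have hcn : 0 ≤ ‖c‖ := norm_nonneg c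
        have hwe : ‖w‖ * ‖e‖ ≤ M * (‖a‖ + ‖c‖) * ‖e‖ :=
          mul_le_mul_of_nonneg_right hw' (norm_nonneg e)
        set S := ‖a‖ + ‖b‖ + ‖c‖ with hS
        have h1 : ‖v‖ * (‖a‖ + ‖c‖ + ‖d e‖) ≤ ‖v‖ * (2 * S) :=
          mul_le_mul_of_nonneg_left (by rw [hS]; linarith) hvn
        have h2 : ‖b‖ * ‖d v‖ ≤ 2 * S * ‖d v‖ :=
          mul_le_mul_of_nonneg_right (by rw [hS]; linarith) hdvn
        have h3 : 2 * S * (‖v‖ + ‖d v‖) ≤ 2 * S * (K * ‖e‖) :=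
          mul_le_mul_of_nonneg_left hv' (by rw [hS]; positivity)
        have h4 : M * (‖a‖ + ‖c‖) * ‖e‖ ≤ M * S * ‖e‖ :=
          mul_le_mul_of_nonneg_right
            (mul_le_mul_of_nonneg_left (by rw [hS]; linarith) hM) (norm_nonneg e)
        linarith [hCS, hCS2, hCS3, hCS4, hCS5, hwe, h1, h2, h3, h4]
      exact le_of_mul_le_mul_right hbound h0
  calc ‖e‖ + ‖d e‖ ≤ (2 * K + M) * (‖a‖ + ‖b‖ + ‖c‖) + (‖a‖ + ‖c‖) := add_le_add he hde
    _ ≤ (2 * K + M + 1) * (‖a‖ + ‖b‖ + ‖c‖) := by nlinarith [norm_nonneg b]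
end
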